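/- arXiv:2601.16285 — 5 statements merged into one kernel-verified Lean document; each statement's English description precedes it below -/
import Mathlib

section
/- The sequence c_N is strictly increasing for integers N ≥ 3 (c_M < c_N whenever 3 ≤ M < N are integers), and c_N tends to 1 as N → ∞. Consequently c_N ≤ 1 for every integer N ≥ 3. -/
/-!
By Euler's limit formula `Γ(s) = lim n^s n! / ∏_{j ≤ n} (s + j)`, a ratio of products of Gamma
values whose arguments have equal sums is an infinite product of rational factors: the powers
`n^s` and the factorials cancel. Hence `c_N² = A(1/N)` with
`A(x) = ∏_{a = 1, 2, …} ((a + x) / (a - x))² (a - 2x) / (a + 2x)`.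
Each factor is strictly decreasing for `|x| < a/2`, its logarithmic derivative being
`4a/(a² - x²) - 4a/(a² - 4x²) < 0`, so `A` is strictly decreasing on `(-1/2, 1/2)` and `c_N`
increases with `N`. Continuity of `Γ` at `1` gives `c_N → √(A 0) = 1`, and then `c_N ≤ 1`.
-/

open Real Filter Topology Finset

noncomputable def schwarzChristoffelConst (N : ℕ) : ℝ :=
  Real.sqrt ((Real.Gamma (1 - 1 / N)) ^ 2 * Real.Gamma (1 + 2 / N) /
    ((Real.Gamma (1 + 1 / N)) ^ 2 * Real.Gamma (1 - 2 / N)))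

section GaussProduct

variable {ι : Type*} [Fintype ι] {s t : ι → ℝ}

-- No positivity is needed: if some `s i + j` or `t i + j` vanishes, both sides are junk `0`.
lemma prod_GammaSeq_div_prod_GammaSeq (hst : ∑ i, s i = ∑ i, t i) {n : ℕ} (hn : n ≠ 0) :
    (∏ i, GammaSeq (s i) n) / ∏ i, GammaSeq (t i) n =
      ∏ k ∈ range (n + 1), ∏ i, (t i + k) / (s i + k) := by
  have hn0 : (0 : ℝ) < n := by positivity
  have hprod (u : ι → ℝ) : ∏ i, GammaSeq (u i) n =
      (n : ℝ) ^ (∑ i, u i) * (n.factorial : ℝ) ^ Fintype.card ι /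
        ∏ i, ∏ j ∈ range (n + 1), (u i + j) := by
    simp only [GammaSeq, prod_div_distrib, prod_mul_distrib, rpow_sum_of_pos hn0, prod_const,
      card_univ]
  rw [hprod, hprod, hst, div_div_div_cancel_left' _ _ (by positivity)]
  simp only [← prod_div_distrib]
  exact prod_comm

theorem tendsto_prod_range_prod_div_Gamma (hst : ∑ i, s i = ∑ i, t i) (ht : ∀ i, 0 < t i) :
    Tendsto (fun n ↦ ∏ k ∈ range n, ∏ i, (t i + k) / (s i + k)) atTop
      (𝓝 ((∏ i, Gamma (s i)) / ∏ i, Gamma (t i))) := by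
  have hlim := (tendsto_finsetProd univ fun i _ ↦ GammaSeq_tendsto_Gamma (s i)).div
    (tendsto_finsetProd univ fun i _ ↦ GammaSeq_tendsto_Gamma (t i))
    (prod_ne_zero_iff.2 fun i _ ↦ (Gamma_pos_of_pos (ht i)).ne')
  refine (tendsto_add_atTop_iff_nat 1).1 (hlim.congr' ?_)
  filter_upwards [eventually_ne_atTop 0] with n hn
  exact prod_GammaSeq_div_prod_GammaSeq hst hn

end GaussProduct

lemma lt_of_tendsto_prod_range {a b : ℕ → ℝ} {A B : ℝ}
    (hA : Tendsto (fun n ↦ ∏ k ∈ range n, a k) atTop (𝓝 A))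
    (hB : Tendsto (fun n ↦ ∏ k ∈ range n, b k) atTop (𝓝 B))
    (ha : ∀ k, 0 ≤ a k) (hab : ∀ k, a k ≤ b k) (h0 : a 0 < b 0) (hA0 : 0 < A) : A < B := by
  have hle : b 0 * A ≤ a 0 * B := by
    refine le_of_tendsto_of_tendsto (hA.const_mul _) (hB.const_mul _)
      (eventually_atTop.2 ⟨1, fun n hn ↦ ?_⟩)
    obtain ⟨m, rfl⟩ := Nat.exists_eq_add_of_le' hn
    have htail : ∏ k ∈ range m, a (k + 1) ≤ ∏ k ∈ range m, b (k + 1) :=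
      prod_le_prod (fun k _ ↦ ha _) fun k _ ↦ hab _
    simp only [prod_range_succ']
    nlinarith [mul_le_mul_of_nonneg_left htail (mul_nonneg (ha 0) ((ha 0).trans (hab 0)))]
  nlinarith [ha 0]

noncomputable def schwarzChristoffelSq (x : ℝ) : ℝ :=
  Gamma (1 - x) ^ 2 * Gamma (1 + 2 * x) / (Gamma (1 + x) ^ 2 * Gamma (1 - 2 * x))

noncomputable def schwarzChristoffelFactor (a x : ℝ) : ℝ :=
  ((a + x) / (a - x)) ^ 2 * ((a - 2 * x) / (a + 2 * x))

lemma schwarzChristoffelConst_eq_sqrt (N : ℕ) :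
    schwarzChristoffelConst N = √(schwarzChristoffelSq (1 / N)) := by
  simp only [schwarzChristoffelConst, schwarzChristoffelSq, mul_one_div]

lemma schwarzChristoffelSq_zero : schwarzChristoffelSq 0 = 1 := by
  simp [schwarzChristoffelSq]

lemma schwarzChristoffelSq_pos {x : ℝ} (hx : x ∈ Set.Ioo (-(1 / 2)) (1 / 2)) :
    0 < schwarzChristoffelSq x := by
  obtain ⟨hx1, hx2⟩ := hx
  have := Gamma_pos_of_pos (by linarith : 0 < 1 - x)
  have := Gamma_pos_of_pos (by linarith : 0 < 1 + 2 * x)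
  have := Gamma_pos_of_pos (by linarith : 0 < 1 + x)
  have := Gamma_pos_of_pos (by linarith : 0 < 1 - 2 * x)
  unfold schwarzChristoffelSq
  positivity

lemma continuousAt_schwarzChristoffelSq_zero : ContinuousAt schwarzChristoffelSq 0 := by
  have hΓ : ContinuousAt Gamma 1 :=
    (differentiableAt_Gamma fun m h ↦ by linarith [m.cast_nonneg (α := ℝ)]).continuousAt
  have hΓ' {f : ℝ → ℝ} (hf : ContinuousAt f 0) (hf0 : f 0 = 1) :
      ContinuousAt (fun x ↦ Gamma (f x)) 0 :=
    hΓ.comp_of_eq hf hf0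
  unfold schwarzChristoffelSq
  exact (((hΓ' (by fun_prop) (by simp)).pow 2).mul (hΓ' (by fun_prop) (by simp))).div
    (((hΓ' (by fun_prop) (by simp)).pow 2).mul (hΓ' (by fun_prop) (by simp))) (by simp)

lemma tendsto_prod_schwarzChristoffelFactor {x : ℝ} (hx : x ∈ Set.Ioo (-(1 / 2)) (1 / 2)) :
    Tendsto (fun n ↦ ∏ k ∈ range n, schwarzChristoffelFactor (1 + k) x) atTop
      (𝓝 (schwarzChristoffelSq x)) := by
  obtain ⟨hx1, hx2⟩ := hx
  have hsum : ∑ i, ![1 - x, 1 - x, 1 + 2 * x] i = ∑ i, ![1 + x, 1 + x, 1 - 2 * x] i := by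
    simp only [Fin.sum_univ_three, Matrix.cons_val_zero, Matrix.cons_val_one, Matrix.cons_val]
    ring
  have hpos : ∀ i, 0 < ![1 + x, 1 + x, 1 - 2 * x] i := by
    intro i
    fin_cases i <;> simp only [Fin.zero_eta, Fin.mk_one, Fin.reduceFinMk, Matrix.cons_val_zero,
      Matrix.cons_val_one, Matrix.cons_val] <;> linarith
  have h := tendsto_prod_range_prod_div_Gamma hsum hpos
  simp only [Fin.prod_univ_three, Matrix.cons_val_zero, Matrix.cons_val_one,
    Matrix.cons_val_two, Matrix.tail_cons, Matrix.head_cons] at h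
  convert h using 2 with n
  · refine prod_congr rfl fun k _ ↦ ?_
    rw [schwarzChristoffelFactor]
    ring
  · rw [schwarzChristoffelSq]
    ring

lemma schwarzChristoffelFactor_nonneg {a x : ℝ} (hx : x ∈ Set.Ioo (-(a / 2)) (a / 2)) :
    0 ≤ schwarzChristoffelFactor a x := by
  obtain ⟨hx1, hx2⟩ := hx
  have : 0 ≤ (a - 2 * x) / (a + 2 * x) := div_nonneg (by linarith) (by linarith)
  unfold schwarzChristoffelFactor
  positivity

lemma schwarzChristoffelFactor_strictAntiOn {a : ℝ} (ha : 0 < a) :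
    StrictAntiOn (schwarzChristoffelFactor a) (Set.Ioo (-(a / 2)) (a / 2)) := by
  rintro y ⟨hy1, hy2⟩ x ⟨hx1, hx2⟩ hyx
  have key : (a + y) ^ 2 * (a - 2 * y) * ((a - x) ^ 2 * (a + 2 * x))
      - (a + x) ^ 2 * (a - 2 * x) * ((a - y) ^ 2 * (a + 2 * y))
      = 4 * a * (x - y) * (a ^ 2 * (x ^ 2 + x * y + y ^ 2) - 3 * x ^ 2 * y ^ 2) := by
    ring
  have hx : 0 < a ^ 2 - 4 * x ^ 2 := by nlinarith
  have hy : 0 < a ^ 2 - 4 * y ^ 2 := by nlinarith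
  have hxy : 0 < x ^ 2 * (a ^ 2 - 4 * y ^ 2) + y ^ 2 * (a ^ 2 - 4 * x ^ 2) := by
    rcases lt_or_ge 0 x with h | h
    · nlinarith [mul_pos (pow_pos h 2) hy, mul_nonneg (sq_nonneg y) hx.le]
    · nlinarith [mul_pos (by nlinarith : 0 < y ^ 2) hx, mul_nonneg (sq_nonneg x) hy.le]
  -- `2 (a²(x² + xy + y²) - 3x²y²) = x²(a² - 4y²) + y²(a² - 4x²) + 2x²y² + a²(x + y)²`
  have hpos : 0 < a ^ 2 * (x ^ 2 + x * y + y ^ 2) - 3 * x ^ 2 * y ^ 2 := by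
    nlinarith [mul_nonneg (sq_nonneg x) (sq_nonneg y), mul_nonneg (sq_nonneg a) (sq_nonneg (x + y))]
  have hx' : 0 < (a - x) ^ 2 * (a + 2 * x) := mul_pos (by nlinarith) (by linarith)
  have hy' : 0 < (a - y) ^ 2 * (a + 2 * y) := mul_pos (by nlinarith) (by linarith)
  simp only [schwarzChristoffelFactor, div_pow, ← mul_div_mul_comm]
  rw [div_lt_div_iff₀ hx' hy']
  nlinarith [mul_pos (mul_pos (mul_pos four_pos ha) (sub_pos.2 hyx)) hpos]

lemma schwarzChristoffelSq_strictAntiOn :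
    StrictAntiOn schwarzChristoffelSq (Set.Ioo (-(1 / 2)) (1 / 2)) := by
  intro y hy x hx hyx
  have hmem {z : ℝ} (hz : z ∈ Set.Ioo (-(1 / 2)) (1 / 2)) (k : ℕ) :
      z ∈ Set.Ioo (-((1 + k : ℝ) / 2)) ((1 + k) / 2) := by
    obtain ⟨h1, h2⟩ := hz
    constructor <;> linarith [k.cast_nonneg (α := ℝ)]
  have hlt (k : ℕ) : schwarzChristoffelFactor (1 + k) x < schwarzChristoffelFactor (1 + k) y :=
    schwarzChristoffelFactor_strictAntiOn (by positivity) (hmem hy k) (hmem hx k) hyx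
  exact lt_of_tendsto_prod_range (tendsto_prod_schwarzChristoffelFactor hx)
    (tendsto_prod_schwarzChristoffelFactor hy) (fun k ↦ schwarzChristoffelFactor_nonneg (hmem hx k))
    (fun k ↦ (hlt k).le) (hlt 0) (schwarzChristoffelSq_pos hx)

lemma schwarzChristoffelConst_lt {M N : ℕ} (hM : 3 ≤ M) (hMN : M < N) :
    schwarzChristoffelConst M < schwarzChristoffelConst N := by
  have hM' : (3 : ℝ) ≤ M := by exact_mod_cast hM
  have hMN' : (M : ℝ) < N := by exact_mod_cast hMN
  have hmem {K : ℕ} (hK : (3 : ℝ) ≤ K) : 1 / (K : ℝ) ∈ Set.Ioo (-(1 / 2)) (1 / 2) := by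
    constructor
    · have : 0 < 1 / (K : ℝ) := by positivity
      linarith
    · exact (one_div_le_one_div_of_le (by norm_num) hK).trans_lt (by norm_num)
  rw [schwarzChristoffelConst_eq_sqrt, schwarzChristoffelConst_eq_sqrt]
  exact sqrt_lt_sqrt (schwarzChristoffelSq_pos (hmem hM')).le <|
    schwarzChristoffelSq_strictAntiOn (hmem (hM'.trans hMN'.le)) (hmem hM')
      (one_div_lt_one_div_of_lt (by linarith) hMN')

lemma tendsto_schwarzChristoffelConst : Tendsto schwarzChristoffelConst atTop (𝓝 1) := by
  have h := (continuous_sqrt.tendsto _).comp <|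
    continuousAt_schwarzChristoffelSq_zero.tendsto.comp tendsto_one_div_atTop_nhds_zero_nat
  rw [schwarzChristoffelSq_zero, sqrt_one] at h
  exact h.congr fun N ↦ (schwarzChristoffelConst_eq_sqrt N).symm

/-- The sequence `c_N` is strictly increasing for `N ≥ 3` and tends to `1` as `N → ∞`;
consequently `c_N ≤ 1` for every `N ≥ 3`. -/
theorem schwarzChristoffelConst_strictMono_tendsto_one :
    (∀ M N : ℕ, 3 ≤ M → M < N → schwarzChristoffelConst M < schwarzChristoffelConst N) ∧
    Tendsto schwarzChristoffelConst atTop (nhds 1) ∧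
    (∀ N : ℕ, 3 ≤ N → schwarzChristoffelConst N ≤ 1) :=
  ⟨fun _ _ ↦ schwarzChristoffelConst_lt, tendsto_schwarzChristoffelConst, fun N hN ↦
    ge_of_tendsto tendsto_schwarzChristoffelConst <|
      (eventually_gt_atTop N).mono fun _ hM ↦ (schwarzChristoffelConst_lt hN hM).le⟩
end

section
/- For every integer k ≥ 1 and every z ∈ ℂ with |z| < 1, the multiple polylogarithm with k indices all equal to 1 satisfies Li_{1,…,1}(z) = (−1)^k (log(1−z))^k / k!, i.e. Σ_{0<n₁<⋯<n_k} z^{n_k}/(n₁ n₂ ⋯ n_k) = (−log(1−z))^k / k!. -/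
/-- The multiple polylogarithm `Li_{m₀,…,m_k}(z) = Σ_{0<n₀<⋯<n_k} z^{n_k}/(n₀^{m₀}⋯n_k^{m_k})`
(with `k + 1` indices). -/
noncomputable def multiPolylog {k : ℕ} (m : Fin (k + 1) → ℕ) (z : ℂ) : ℂ :=
  ∑' n : {n : Fin (k + 1) → ℕ // StrictMono n ∧ 0 < n 0},
    z ^ (n.1 (Fin.last k)) / ∏ i, ((n.1 i : ℂ)) ^ (m i)

/-!
Write a chain `0 < n₀ < ⋯ < n_{m-1}` through its gaps, `n_i = (a₀ + 1) + ⋯ + (a_i + 1)` with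
`a ∈ ℕ^m`. Then `Li_{1,…,1}(z)` becomes `∑_a ∏ z^{a_i+1} / ∏_i n_i`, whose numerator is symmetric
in `a`. Averaging over the `m!` orderings of the gaps and using the partial-fraction identity
`∑_σ ∏_i 1/(b_{σ 0} + ⋯ + b_{σ i}) = ∏_i 1/b_i` turns the summand into `∏_i z^{b_i}/b_i`
(with `b_i = a_i + 1`), so `m! · Li_{1,…,1}(z) = (∑_{b ≥ 1} z^b/b)^m = (-log (1 - z))^m`.
-/

open Finset

theorem Fin.mul_prod_swap_zero_succ {M : Type*} [CommMonoid M] {m : ℕ} (a : Fin (m + 1) → M)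
    (p : Fin (m + 1)) : a p * ∏ i : Fin m, a (Equiv.swap 0 p i.succ) = ∏ i, a i := by
  rw [← Equiv.prod_comp (Equiv.swap 0 p) a, Fin.prod_univ_succ, Equiv.swap_apply_left]

section PermutationIdentity

variable {K : Type*} [Field K] [PartialOrder K] [IsStrictOrderedRing K]

theorem sum_perm_prod_inv_sum_Ici {m : ℕ} (a : Fin m → K) (ha : ∀ i, 0 < a i) :
    ∑ σ : Equiv.Perm (Fin m), ∏ i, (∑ j ∈ Ici i, a (σ j))⁻¹ = ∏ i, (a i)⁻¹ := by
  induction m with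
  | zero => simp
  | succ m ih =>
    -- Group the permutations by `p = σ 0`: the factor for `i = 0` is always `(∑ a)⁻¹`, and the
    -- remaining factors are those of the statement for `a ∘ swap 0 p ∘ succ`.
    have hterm (p : Fin (m + 1)) (e : Equiv.Perm (Fin m)) :
        ∏ i, (∑ j ∈ Ici i, a (Equiv.Perm.decomposeFin.symm (p, e) j))⁻¹ =
          (∑ j, a j)⁻¹ * ∏ i : Fin m, (∑ j ∈ Ici i, a (Equiv.swap 0 p (e j).succ))⁻¹ := by
      rw [Fin.prod_univ_succ, show Ici (0 : Fin (m + 1)) = univ from Ici_bot, Equiv.sum_comp]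
      congr 1
      refine prod_congr rfl fun i _ => ?_
      rw [← Fin.map_succEmb_Ici, sum_map]
      simp [Equiv.Perm.decomposeFin_symm_apply_succ]
    have hinner (p : Fin (m + 1)) :
        ∑ e : Equiv.Perm (Fin m), ∏ i : Fin m, (∑ j ∈ Ici i, a (Equiv.swap 0 p (e j).succ))⁻¹ =
          a p * ∏ i, (a i)⁻¹ := by
      refine (ih (fun t => a (Equiv.swap 0 p t.succ)) fun _ => ha _).trans ?_
      have hswap := Fin.mul_prod_swap_zero_succ (fun i => (a i)⁻¹) p
      beta_reduce at hswap
      rw [← hswap, mul_inv_cancel_left₀ (ha p).ne']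
    have hsum : (∑ j, a j) ≠ 0 := (sum_pos (fun j _ => ha j) univ_nonempty).ne'
    rw [← Equiv.sum_comp Equiv.Perm.decomposeFin.symm, Fintype.sum_prod_type]
    simp only [hterm, ← mul_sum, hinner, ← sum_mul]
    rw [← mul_assoc, inv_mul_cancel₀ hsum, one_mul]

theorem sum_perm_prod_inv_sum_Iic {m : ℕ} (a : Fin m → K) (ha : ∀ i, 0 < a i) :
    ∑ σ : Equiv.Perm (Fin m), ∏ i, (∑ j ∈ Iic i, a (σ j))⁻¹ = ∏ i, (a i)⁻¹ := by
  rw [← sum_perm_prod_inv_sum_Ici a ha, ← Equiv.sum_comp (Equiv.mulRight Fin.revPerm)]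
  refine sum_congr rfl fun σ _ => ?_
  rw [← Equiv.prod_comp Fin.revPerm]
  refine prod_congr rfl fun i _ => ?_
  conv_rhs => rw [← Fin.rev_rev i, ← Fin.map_revPerm_Iic, sum_map]
  rfl

end PermutationIdentity

section Chains

variable {m : ℕ}

def chainOfGaps (a : Fin m → ℕ) (i : Fin m) : ℕ := ∑ j ∈ Iic i, (a j + 1)

theorem chainOfGaps_zero (a : Fin (m + 1) → ℕ) : chainOfGaps a 0 = a 0 + 1 := by
  rw [chainOfGaps, show Iic (0 : Fin (m + 1)) = {0} from Iic_bot, sum_singleton]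

theorem chainOfGaps_succ (a : Fin (m + 1) → ℕ) (i : Fin m) :
    chainOfGaps a i.succ = chainOfGaps a i.castSucc + (a i.succ + 1) := by
  have hIic : Iic i.succ = insert i.succ (Iic i.castSucc) := by
    ext x
    simp only [mem_Iic, mem_insert, Fin.le_def, Fin.ext_iff, Fin.val_succ, Fin.val_castSucc]
    omega
  rw [chainOfGaps, hIic, sum_insert (by simp [Fin.le_def]), add_comm]
  rfl

theorem chainOfGaps_last (a : Fin (m + 1) → ℕ) :
    chainOfGaps a (Fin.last m) = ∑ i, (a i + 1) := by
  rw [chainOfGaps, ← Fin.top_eq_last, Iic_top]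

theorem chainOfGaps_pos (a : Fin m → ℕ) (i : Fin m) : 0 < chainOfGaps a i :=
  sum_pos (fun _ _ => Nat.succ_pos _) ⟨i, mem_Iic.mpr le_rfl⟩

theorem strictMono_chainOfGaps (a : Fin (m + 1) → ℕ) : StrictMono (chainOfGaps a) :=
  Fin.strictMono_iff_lt_succ.mpr fun i => by rw [chainOfGaps_succ]; omega

def gapsEquivChain (m : ℕ) :
    (Fin (m + 1) → ℕ) ≃ {n : Fin (m + 1) → ℕ // StrictMono n ∧ 0 < n 0} where
  toFun a := ⟨chainOfGaps a, strictMono_chainOfGaps a, chainOfGaps_pos a 0⟩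
  invFun n := Fin.cases (n.1 0 - 1) fun i => n.1 i.succ - n.1 i.castSucc - 1
  left_inv a := by
    funext i
    cases i using Fin.cases with
    | zero => simp [chainOfGaps_zero]
    | succ i => simp only [Fin.cases_succ, chainOfGaps_succ]; omega
  right_inv := by
    rintro ⟨n, hmono, hpos⟩
    ext i : 2
    induction i using Fin.induction with
    | zero => simp only [chainOfGaps_zero, Fin.cases_zero]; omega
    | succ i ih =>
      have := hmono i.castSucc_lt_succ
      dsimp only at ih ⊢
      rw [chainOfGaps_succ, ih, Fin.cases_succ]
      omega

end Chains

section ProductsOfSeries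

variable {β : Type*}

theorem summable_fin_pi_prod {g : β → ℝ} (hg : Summable g) (hg0 : 0 ≤ g) (m : ℕ) :
    Summable fun a : Fin m → β => ∏ i, g (a i) := by
  induction m with
  | zero => exact .of_finite
  | succ m ih =>
    rw [← (Fin.consEquiv fun _ => β).summable_iff]
    refine (hg.mul_of_nonneg ih hg0 fun a => prod_nonneg fun i _ => hg0 _).congr fun p => ?_
    simp [Fin.consEquiv_apply, Fin.prod_univ_succ]

theorem tsum_fin_pi_prod {R : Type*} [NormedField R] [CompleteSpace R] {f : β → R}
    (hf : Summable (‖f ·‖)) (m : ℕ) : ∑' a : Fin m → β, ∏ i, f (a i) = (∑' b, f b) ^ m := by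
  induction m with
  | zero => simp
  | succ m ih =>
    have hnorm : Summable fun a : Fin m → β => ‖∏ i, f (a i)‖ := by
      simpa only [norm_prod] using summable_fin_pi_prod hf (fun _ => norm_nonneg _) m
    rw [← (Fin.consEquiv fun _ => β).tsum_eq, pow_succ', ← ih,
      tsum_mul_tsum_of_summable_norm hf hnorm]
    simp [Fin.consEquiv_apply, Fin.prod_univ_succ]

end ProductsOfSeries

section MultiPolylog

open Complex
open scoped ComplexOrder Nat

variable (z : ℂ) {m : ℕ}

noncomputable def gapTerm (a : Fin m → ℕ) : ℂ :=
  (∏ i, z ^ (a i + 1)) / ∏ i, (chainOfGaps a i : ℂ)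

theorem multiPolylog_ones_eq_tsum_gapTerm (k : ℕ) :
    multiPolylog (fun _ : Fin (k + 1) => 1) z = ∑' a : Fin (k + 1) → ℕ, gapTerm z a := by
  rw [multiPolylog, ← (gapsEquivChain k).tsum_eq]
  refine tsum_congr fun a => ?_
  simp only [gapsEquivChain, Equiv.coe_fn_mk, pow_one, chainOfGaps_last, gapTerm,
    prod_pow_eq_pow_sum]

theorem norm_gapTerm_le (a : Fin m → ℕ) : ‖gapTerm z a‖ ≤ ∏ i, ‖z‖ ^ (a i + 1) := by
  rw [gapTerm, norm_div, ← Nat.cast_prod, norm_natCast, norm_prod]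
  simp only [norm_pow]
  refine div_le_self (by positivity) ?_
  exact_mod_cast Nat.one_le_iff_ne_zero.mpr
    (prod_ne_zero_iff.mpr fun i _ => (chainOfGaps_pos a i).ne')

theorem summable_norm_pow_succ {z : ℂ} (hz : ‖z‖ < 1) :
    Summable fun n : ℕ => ‖z‖ ^ (n + 1) :=
  (summable_nat_add_iff 1).mpr (summable_geometric_of_lt_one (norm_nonneg z) hz)

theorem summable_gapTerm {z : ℂ} (hz : ‖z‖ < 1) (m : ℕ) :
    Summable (gapTerm z : (Fin m → ℕ) → ℂ) :=
  .of_norm_bounded (summable_fin_pi_prod (summable_norm_pow_succ hz) (fun _ => by positivity) m)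
    (norm_gapTerm_le z)

theorem sum_perm_gapTerm (a : Fin m → ℕ) :
    ∑ σ : Equiv.Perm (Fin m), gapTerm z (a ∘ σ) = ∏ i, z ^ (a i + 1) / (a i + 1) := by
  have hnum (σ : Equiv.Perm (Fin m)) : ∏ i, z ^ ((a ∘ σ) i + 1) = ∏ i, z ^ (a i + 1) :=
    Equiv.prod_comp σ fun i => z ^ (a i + 1)
  calc ∑ σ : Equiv.Perm (Fin m), gapTerm z (a ∘ σ)
      = (∏ i, z ^ (a i + 1)) *
          ∑ σ : Equiv.Perm (Fin m), ∏ i, (∑ j ∈ Iic i, ((a (σ j) : ℂ) + 1))⁻¹ := by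
        simp only [gapTerm, hnum, div_eq_mul_inv, mul_sum, ← prod_inv_distrib, chainOfGaps]
        push_cast
        rfl
    _ = ∏ i, z ^ (a i + 1) / (a i + 1) := by
        have hrec := sum_perm_prod_inv_sum_Iic (fun i => (a i : ℂ) + 1) fun i => by positivity
        beta_reduce at hrec
        rw [hrec, ← prod_mul_distrib]
        simp only [div_eq_mul_inv]

theorem factorial_mul_tsum_gapTerm {z : ℂ} (hz : ‖z‖ < 1) (m : ℕ) :
    m ! * ∑' a : Fin m → ℕ, gapTerm z a = (-log (1 - z)) ^ m := by
  have hnorm : Summable fun n : ℕ => ‖z ^ (n + 1) / (n + 1)‖ := by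
    refine (summable_norm_pow_succ hz).of_nonneg_of_le (fun _ => norm_nonneg _) fun n => ?_
    rw [norm_div, norm_pow, ← Nat.cast_add_one, norm_natCast]
    exact div_le_self (by positivity) (by simp)
  calc (m ! : ℂ) * ∑' a : Fin m → ℕ, gapTerm z a
      = ∑ _σ : Equiv.Perm (Fin m), ∑' a : Fin m → ℕ, gapTerm z a := by
        rw [sum_const, card_univ, Fintype.card_perm, Fintype.card_fin, nsmul_eq_mul]
    _ = ∑ σ : Equiv.Perm (Fin m), ∑' a : Fin m → ℕ, gapTerm z (a ∘ σ) :=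
        sum_congr rfl fun σ _ => ((σ.symm.arrowCongr (Equiv.refl ℕ)).tsum_eq (gapTerm z)).symm
    _ = ∑' a : Fin m → ℕ, ∑ σ : Equiv.Perm (Fin m), gapTerm z (a ∘ σ) := by
        refine (Summable.tsum_finsetSum fun σ _ => ?_).symm
        exact ((σ.symm.arrowCongr (Equiv.refl ℕ)).summable_iff (f := gapTerm z)).mpr
          (summable_gapTerm hz m)
    _ = ∑' a : Fin m → ℕ, ∏ i, z ^ (a i + 1) / (a i + 1) := tsum_congr (sum_perm_gapTerm z)
    _ = (-log (1 - z)) ^ m := by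
        rw [tsum_fin_pi_prod hnorm, (hasSum_taylorSeries_neg_log' hz).tsum_eq]

end MultiPolylog

/-- For every `k ≥ 1` (here the number of indices is `k + 1 ≥ 1`) and `|z| < 1`, the multiple
polylogarithm with all indices equal to `1` satisfies
`Li_{1,…,1}(z) = (−1)^{k+1}·(log(1−z))^{k+1}/(k+1)! = (−log(1−z))^{k+1}/(k+1)!`. -/
theorem multiPolylog_ones_eq (k : ℕ) (z : ℂ) (hz : ‖z‖ < 1) :
    multiPolylog (fun _ : Fin (k + 1) => 1) z =
      (-1 : ℂ) ^ (k + 1) * (Complex.log (1 - z)) ^ (k + 1) / (Nat.factorial (k + 1)) ∧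
    multiPolylog (fun _ : Fin (k + 1) => 1) z =
      (-(Complex.log (1 - z))) ^ (k + 1) / (Nat.factorial (k + 1)) := by
  have hLi : multiPolylog (fun _ : Fin (k + 1) => 1) z =
      (-(Complex.log (1 - z))) ^ (k + 1) / (Nat.factorial (k + 1)) := by
    rw [eq_div_iff (Nat.cast_ne_zero.mpr (Nat.factorial_ne_zero _)), mul_comm,
      multiPolylog_ones_eq_tsum_gapTerm, factorial_mul_tsum_gapTerm hz]
  exact ⟨by rw [hLi, neg_pow], hLi⟩
end

section
/- Let z ∈ ℂ and 0 < b < 1, and assume there is C < 1 such that |1 − tz| ≤ C for all t ∈ [b, 1]. Let θ = arctan(π/|log C|). If m ≥ 1 is an integer with m·θ ≤ π/2, then the real part of (log(1−tz))^m does not change sign as t ranges over [b,1] (i.e. it is either ≥ 0 for all t ∈ [b,1] or ≤ 0 for all t ∈ [b,1]), and likewise the imaginary part of (log(1−tz))^m does not change sign on [b,1]. -/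
/-!
Put `w = -log (1 - t z)`. Its real part is `-log ‖1 - t z‖ ≥ |log C|` and its imaginary
part is `-arg (1 - t z) ∈ [-π, π)`, so
`|arg w| = arctan (|Im w| / Re w) ≤ arctan (π / |log C|) = θ`.
Hence `m · arg w ∈ [-π/2, π/2]`, so `Re (w ^ m) ≥ 0` and `Im (w ^ m)` has the sign of `Im w`,
which for `t > 0` is the sign of `Im z`. Finally `(log (1 - t z)) ^ m = (-1) ^ m w ^ m`.
-/

open Real

namespace Complex

lemma pow_eq_norm_pow_mul_exp_arg (v : ℂ) (m : ℕ) :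
    v ^ m = (‖v‖ ^ m : ℝ) * exp ((m * arg v : ℝ) * I) := by
  conv_lhs => rw [← norm_mul_exp_arg_mul_I v]
  rw [mul_pow, ← exp_nat_mul]
  push_cast
  ring_nf

lemma re_pow_eq_norm_pow_mul_cos (v : ℂ) (m : ℕ) :
    (v ^ m).re = ‖v‖ ^ m * Real.cos (m * arg v) := by
  rw [pow_eq_norm_pow_mul_exp_arg, re_ofReal_mul, exp_ofReal_mul_I_re]

lemma im_pow_eq_norm_pow_mul_sin (v : ℂ) (m : ℕ) :
    (v ^ m).im = ‖v‖ ^ m * Real.sin (m * arg v) := by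
  rw [pow_eq_norm_pow_mul_exp_arg, im_ofReal_mul, exp_ofReal_mul_I_im]

lemma re_pow_nonneg_of_abs_mul_arg_le {v : ℂ} {m : ℕ} (h : |m * arg v| ≤ π / 2) :
    0 ≤ (v ^ m).re := by
  rw [re_pow_eq_norm_pow_mul_cos]
  exact mul_nonneg (by positivity) (Real.cos_nonneg_of_mem_Icc (abs_le.mp h))

lemma im_pow_nonneg_of_arg_nonneg {v : ℂ} {m : ℕ} (h0 : 0 ≤ arg v) (h : m * arg v ≤ π) :
    0 ≤ (v ^ m).im := by
  rw [im_pow_eq_norm_pow_mul_sin]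
  exact mul_nonneg (by positivity) (Real.sin_nonneg_of_nonneg_of_le_pi (by positivity) h)

lemma im_pow_nonpos_of_arg_nonpos {v : ℂ} {m : ℕ} (h0 : arg v ≤ 0) (h : -π ≤ m * arg v) :
    (v ^ m).im ≤ 0 := by
  rw [im_pow_eq_norm_pow_mul_sin]
  exact mul_nonpos_of_nonneg_of_nonpos (by positivity)
    (Real.sin_nonpos_of_nonpos_of_neg_pi_le (mul_nonpos_of_nonneg_of_nonpos (by positivity) h0) h)

lemma arg_eq_arctan_of_re_pos {v : ℂ} (h : 0 < v.re) : arg v = Real.arctan (v.im / v.re) := by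
  rw [← tan_arg, Real.arctan_tan]
  · exact neg_pi_div_two_lt_arg_iff.mpr (Or.inl h)
  · exact arg_lt_pi_div_two_iff.mpr (Or.inl h)

lemma im_pow_nonneg_of_im_nonneg {v : ℂ} {m : ℕ} (him : 0 ≤ v.im) (h : |m * arg v| ≤ π) :
    0 ≤ (v ^ m).im :=
  im_pow_nonneg_of_arg_nonneg (arg_nonneg_iff.mpr him) (abs_le.mp h).2

lemma im_pow_nonpos_of_im_nonpos {v : ℂ} {m : ℕ} (him : v.im ≤ 0) (h : |m * arg v| ≤ π) :
    (v ^ m).im ≤ 0 := by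
  rcases him.lt_or_eq with him | him
  · exact im_pow_nonpos_of_arg_nonpos (arg_neg_iff.mpr him).le (abs_le.mp h).1
  · -- `arg v` may be `π` here, but `v ^ m` is real anyway.
    have hv : v = (v.re : ℂ) := ext rfl (by simp [him])
    rw [hv, ← ofReal_pow, ofReal_im]

lemma abs_arg_neg_log_le {u : ℂ} {C : ℝ} (hu : ‖u‖ ≤ C) (hC : C < 1) :
    |arg (-log u)| ≤ Real.arctan (π / |Real.log C|) := by
  rcases eq_or_ne u 0 with rfl | hu0
  · simpa using Real.arctan_nonneg.mpr (by positivity)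
  have hpos : 0 < ‖u‖ := norm_pos_iff.mpr hu0
  have hlogC : Real.log C < 0 := Real.log_neg (hpos.trans_le hu) hC
  have hre : |Real.log C| ≤ (-log u).re := by
    rw [abs_of_neg hlogC, neg_re, log_re, neg_le_neg_iff]
    exact Real.log_le_log hpos hu
  have him : |(-log u).im| ≤ π := by
    rw [neg_im, log_im, abs_neg]
    exact abs_arg_le_pi u
  have hlogC' : 0 < |Real.log C| := abs_pos.mpr hlogC.ne
  have hratio : |(-log u).im / (-log u).re| ≤ π / |Real.log C| := by
    rw [abs_div, abs_of_pos (hlogC'.trans_le hre)]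
    exact div_le_div₀ pi_pos.le him hlogC' hre
  obtain ⟨hlower, hupper⟩ := abs_le.mp hratio
  rw [arg_eq_arctan_of_re_pos (hlogC'.trans_le hre), abs_le, ← Real.arctan_neg]
  exact ⟨Real.arctan_mono hlower, Real.arctan_mono hupper⟩

end Complex

lemma forall_nonneg_or_forall_nonpos_of_nonneg_mul {ι : Type*} {s : Set ι} {f : ι → ℝ}
    {c : ℝ} (hc : c ≠ 0) (h : ∀ t ∈ s, 0 ≤ c * f t) :
    (∀ t ∈ s, 0 ≤ f t) ∨ (∀ t ∈ s, f t ≤ 0) := by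
  rcases hc.lt_or_gt with hc | hc
  · exact .inr fun t ht => nonpos_of_mul_nonneg_right (h t ht) hc
  · exact .inl fun t ht => nonneg_of_mul_nonneg_right (h t ht) hc

theorem log_pow_re_im_sign_const_general (z : ℂ) (b C : ℝ) (hb0 : 0 < b)
    (hC : C < 1) (hbound : ∀ t ∈ Set.Icc b 1, ‖1 - (t : ℂ) * z‖ ≤ C)
    (m : ℕ)
    (hθ : (m : ℝ) * Real.arctan (π / |Real.log C|) ≤ π / 2) :
    ((∀ t ∈ Set.Icc b 1, 0 ≤ ((Complex.log (1 - (t : ℂ) * z)) ^ m).re) ∨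
      (∀ t ∈ Set.Icc b 1, ((Complex.log (1 - (t : ℂ) * z)) ^ m).re ≤ 0)) ∧
    ((∀ t ∈ Set.Icc b 1, 0 ≤ ((Complex.log (1 - (t : ℂ) * z)) ^ m).im) ∨
      (∀ t ∈ Set.Icc b 1, ((Complex.log (1 - (t : ℂ) * z)) ^ m).im ≤ 0)) := by
  set v : ℝ → ℂ := fun t => -Complex.log (1 - t * z) with hv
  have hpow (t : ℝ) : v t ^ m = (((-1 : ℝ) ^ m : ℝ) : ℂ) * Complex.log (1 - t * z) ^ m := by
    push_cast
    exact neg_pow _ _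
  have harg : ∀ t ∈ Set.Icc b 1, |m * Complex.arg (v t)| ≤ π / 2 := fun t ht => by
    rw [abs_mul, Nat.abs_cast]
    exact (mul_le_mul_of_nonneg_left (Complex.abs_arg_neg_log_le (hbound t ht) hC)
      m.cast_nonneg).trans hθ
  have hargπ : ∀ t ∈ Set.Icc b 1, |m * Complex.arg (v t)| ≤ π := fun t ht =>
    (harg t ht).trans (by linarith [pi_pos])
  have him_v (t : ℝ) : (v t).im = -Complex.arg (1 - t * z) := by simp [hv, Complex.log_im]
  have him_u (t : ℝ) : (1 - t * z).im = -(t * z.im) := by simp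
  have hsign : (-1 : ℝ) ^ m ≠ 0 := pow_ne_zero m (by norm_num)
  refine ⟨forall_nonneg_or_forall_nonpos_of_nonneg_mul hsign fun t ht => ?_, ?_⟩
  · rw [← Complex.re_ofReal_mul, ← hpow]
    exact Complex.re_pow_nonneg_of_abs_mul_arg_le (harg t ht)
  rcases le_or_gt z.im 0 with hz | hz
  · refine forall_nonneg_or_forall_nonpos_of_nonneg_mul (neg_ne_zero.mpr hsign) fun t ht => ?_
    rw [neg_mul, neg_nonneg, ← Complex.im_ofReal_mul, ← hpow]
    refine Complex.im_pow_nonpos_of_im_nonpos ?_ (hargπ t ht)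
    rw [him_v, neg_nonpos, Complex.arg_nonneg_iff, him_u]
    exact neg_nonneg.mpr (mul_nonpos_of_nonneg_of_nonpos (hb0.trans_le ht.1).le hz)
  · refine forall_nonneg_or_forall_nonpos_of_nonneg_mul hsign fun t ht => ?_
    rw [← Complex.im_ofReal_mul, ← hpow]
    refine Complex.im_pow_nonneg_of_im_nonneg ?_ (hargπ t ht)
    rw [him_v, neg_nonneg]
    refine (Complex.arg_neg_iff.mpr ?_).le
    rw [him_u, neg_neg_iff_pos]
    exact mul_pos (hb0.trans_le ht.1) hz

/-- Let `z ∈ ℂ`, `0 < b < 1`, and suppose `|1 − tz| ≤ C < 1` for all `t ∈ [b,1]`. Set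
`θ = arctan(π/|log C|)`. If `m ≥ 1` is an integer with `m·θ ≤ π/2`, then the real and
imaginary parts of `(log(1−tz))^m` do not change sign as `t` ranges over `[b,1]`. -/
theorem log_pow_re_im_sign_const (z : ℂ) (b C : ℝ) (hb0 : 0 < b) (hb1 : b < 1)
    (hC : C < 1) (hbound : ∀ t ∈ Set.Icc b 1, ‖1 - (t : ℂ) * z‖ ≤ C)
    (m : ℕ) (hm : 1 ≤ m)
    (hθ : (m : ℝ) * Real.arctan (π / |Real.log C|) ≤ π / 2) :
    ((∀ t ∈ Set.Icc b 1, 0 ≤ ((Complex.log (1 - (t : ℂ) * z)) ^ m).re) ∨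
      (∀ t ∈ Set.Icc b 1, ((Complex.log (1 - (t : ℂ) * z)) ^ m).re ≤ 0)) ∧
    ((∀ t ∈ Set.Icc b 1, 0 ≤ ((Complex.log (1 - (t : ℂ) * z)) ^ m).im) ∨
      (∀ t ∈ Set.Icc b 1, ((Complex.log (1 - (t : ℂ) * z)) ^ m).im ≤ 0)) :=
  log_pow_re_im_sign_const_general z b C hb0 hC hbound m hθ
end

section
/- Let m ≥ 0 be an integer, 0 < b < 1, y a real number with y > −1, and z ∈ ℂ with 0 < |z| ≤ 1. Define L₂(s) = ((−1)^{m+1}·m!/z) · Σ_{n=0}^{m} ((−1)^n/n!) · (1+y)^{n−m−1} · (log(1−sz))^n · (1−sz)^{1+y}. Then s ↦ (log(1−sz))^m (1−sz)^y is integrable on (b,1) and ∫_b^1 (log(1−sz))^m (1−sz)^y ds = L₂(1) − L₂(b), where in the case z = 1 the value L₂(1) is taken to be 0 (the limit of L₂(s) as s → 1⁻, the singular factors (log(1−s))^n (1−s)^{1+y} having removable singularities with limit 0). -/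
/-!
`L₂` is an antiderivative of the integrand wherever `1 - s z` lies in the slit plane: the
derivative of the `n`-th summand splits into two terms that cancel against those of its
neighbours, leaving only the top one. For `|z| ≤ 1` and `s ∈ [b, 1]` this fails only at
`s = 1, z = 1`, where `L₂` still extends continuously by `0` since `(log t)^n t^(1+y) → 0`
as `t → 0⁺`, so the fundamental theorem of calculus applies. Integrability is automatic by
continuity when `z ≠ 1`; for `z = 1` the integrand is real of constant sign `(-1)^m`, and a
derivative of constant sign is integrable.
-/

open MeasureTheory Finset

/-- The antiderivative
`L₂(s) = ((−1)^{m+1}·m!/z) · Σ_{n=0}^{m} ((−1)^n/n!)·(1+y)^{n−m−1}·(log(1−sz))^n·(1−sz)^{1+y}`. -/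
noncomputable def L₂ (m : ℕ) (y : ℝ) (z : ℂ) (s : ℝ) : ℂ :=
  ((-1 : ℂ) ^ (m + 1) * (Nat.factorial m : ℂ) / z) *
    ∑ n ∈ Finset.range (m + 1),
      ((-1 : ℂ) ^ n / (Nat.factorial n : ℂ)) *
        ((((1 + y) ^ ((n : ℤ) - m - 1) : ℝ)) : ℂ) *
        (Complex.log (1 - (s : ℂ) * z)) ^ n *
        (1 - (s : ℂ) * z) ^ (((1 + y : ℝ)) : ℂ)

open Filter Topology Set Complex Nat

theorem sum_range_neg_one_pow_div_factorial_mul_zpow {K : Type*} [Field K] [CharZero K]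
    {u : K} (hu : u ≠ 0) (L : K) (m : ℕ) :
    ∑ n ∈ range (m + 1), (-1) ^ n / (n ! : K) * u ^ ((n : ℤ) - m - 1) *
      (n * L ^ (n - 1) + u * L ^ n) = (-1) ^ m / (m ! : K) * L ^ m := by
  have htelescope : ∀ m : ℕ, ∑ n ∈ range (m + 1), (-1) ^ n / (n ! : K) * u ^ n *
      (n * L ^ (n - 1) + u * L ^ n) = (-1) ^ m / (m ! : K) * u ^ (m + 1) * L ^ m := by
    intro m
    induction m with
    | zero => simp
    | succ m ih =>
      rw [sum_range_succ, ih, Nat.factorial_succ]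
      push_cast
      field_simp
      ring
  have hzpow : ∀ n : ℕ, u ^ ((n : ℤ) - m - 1) = u ^ n / u ^ (m + 1) := fun n => by
    rw [sub_sub, zpow_sub₀ hu, zpow_natCast, ← Nat.cast_succ, zpow_natCast]
  have hfactor : ∀ n ∈ range (m + 1), (-1) ^ n / (n ! : K) * u ^ ((n : ℤ) - m - 1) *
      (n * L ^ (n - 1) + u * L ^ n)
        = (-1) ^ n / (n ! : K) * u ^ n * (n * L ^ (n - 1) + u * L ^ n) / u ^ (m + 1) :=
    fun n _ => by rw [hzpow]; ring
  rw [sum_congr rfl hfactor, ← sum_div, htelescope]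
  field_simp

theorem one_sub_ofReal_mul_mem_slitPlane {z : ℂ} (hz : ‖z‖ ≤ 1) {s : ℝ} (hs0 : 0 ≤ s)
    (hs1 : s ≤ 1) (h : s < 1 ∨ z ≠ 1) : 1 - (s : ℂ) * z ∈ slitPlane := by
  refine Or.inl ?_
  have hre : (1 - (s : ℂ) * z).re = 1 - s * z.re := by simp
  have hre_le : z.re ≤ 1 := (le_abs_self _).trans ((abs_re_le_norm z).trans hz)
  rw [hre, sub_pos]
  rcases h with hs | hz1
  · nlinarith [abs_re_le_norm z, neg_abs_le z.re]
  · have hre_lt : z.re < 1 := by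
      refine hre_le.lt_of_ne fun hre1 => hz1 (ext hre1 ?_)
      exact abs_re_eq_norm.mp (le_antisymm (abs_re_le_norm z) (by simpa [hre1] using hz))
    rcases le_or_gt z.re 0 with hre_nonpos | hre_pos <;> nlinarith

noncomputable def logPowMulCpow (n : ℕ) (u w : ℂ) : ℂ := log w ^ n * w ^ u

theorem hasDerivAt_logPowMulCpow (n : ℕ) (u : ℂ) {w : ℂ} (hw : w ∈ slitPlane) :
    HasDerivAt (logPowMulCpow n u)
      (w ^ (u - 1) * (n * log w ^ (n - 1) + u * log w ^ n)) w := by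
  have hw0 : w ≠ 0 := slitPlane_ne_zero hw
  refine ((hasDerivAt_log hw).pow n).mul ((hasDerivAt_id w).cpow_const hw) |>.congr_deriv ?_
  simp only [id, Pi.pow_apply, cpow_sub _ _ hw0, cpow_one]
  field_simp

theorem logPowMulCpow_zero (n : ℕ) {u : ℂ} (hu : u ≠ 0) : logPowMulCpow n u 0 = 0 := by
  simp [logPowMulCpow, zero_cpow hu]

theorem logPowMulCpow_ofReal (n : ℕ) (c : ℝ) {t : ℝ} (ht : 0 ≤ t) :
    logPowMulCpow n c t = ((Real.log t ^ n * t ^ c : ℝ) : ℂ) := by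
  rw [logPowMulCpow, ← ofReal_log ht, ← ofReal_cpow ht]
  push_cast
  rfl

theorem tendsto_logPowMulCpow_nhdsGT_zero (n : ℕ) {c : ℝ} (hc : 0 < c) :
    Tendsto (fun t : ℝ => logPowMulCpow n c t) (𝓝[>] 0) (𝓝 0) := by
  have habs : Tendsto (fun t : ℝ => |Real.log t| ^ n * t ^ c) (𝓝[>] 0) (𝓝 0) := by
    refine (isLittleO_abs_log_rpow_rpow_nhdsGT_zero n (neg_lt_zero.mpr hc)
      ).tendsto_div_nhds_zero.congr' ?_
    filter_upwards [self_mem_nhdsWithin] with t ht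
    rw [Real.rpow_neg (le_of_lt ht), div_inv_eq_mul, Real.rpow_natCast]
  refine squeeze_zero_norm' ?_ habs
  filter_upwards [self_mem_nhdsWithin] with t ht
  rw [logPowMulCpow_ofReal n c (le_of_lt ht), norm_real, Real.norm_eq_abs, abs_mul, abs_pow,
    abs_of_nonneg (Real.rpow_nonneg (le_of_lt ht) c)]

theorem L₂_eq_sum (m : ℕ) (y : ℝ) (z : ℂ) (s : ℝ) :
    L₂ m y z s = ((-1) ^ (m + 1) * (m ! : ℂ) / z) * ∑ n ∈ range (m + 1),
      ((-1) ^ n / (n ! : ℂ) * (((1 + y : ℝ) : ℂ) ^ ((n : ℤ) - m - 1))) *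
        logPowMulCpow n ((1 + y : ℝ) : ℂ) (1 - s * z) := by
  simp only [L₂, logPowMulCpow, ofReal_zpow, mul_assoc]

theorem hasDerivAt_L₂ (m : ℕ) {y : ℝ} (hy : y ≠ -1) {z : ℂ} (hz : z ≠ 0) {s : ℝ}
    (hs : 1 - s * z ∈ slitPlane) :
    HasDerivAt (L₂ m y z) (logPowMulCpow m y (1 - s * z)) s := by
  rw [funext (L₂_eq_sum m y z)]
  set w : ℂ := 1 - s * z
  set u : ℂ := ((1 + y : ℝ) : ℂ)
  have hu : u ≠ 0 := ofReal_ne_zero.mpr fun h => hy (by linarith)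
  have hterm (n : ℕ) : HasDerivAt (fun t : ℝ => logPowMulCpow n u (1 - t * z))
      (w ^ (u - 1) * (n * log w ^ (n - 1) + u * log w ^ n) * -z) s := by
    have hinner : HasDerivAt (fun t : ℂ => 1 - t * z) (-z) s := by
      simpa using ((hasDerivAt_id (s : ℂ)).mul_const z).const_sub 1
    exact ((hasDerivAt_logPowMulCpow n u hs).comp (s : ℂ) hinner).comp_ofReal
  have hsum := (HasDerivAt.fun_sum fun n (_ : n ∈ range (m + 1)) =>
    (hterm n).const_mul ((-1) ^ n / (n ! : ℂ) * u ^ ((n : ℤ) - m - 1))).const_mul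
    ((-1) ^ (m + 1) * (m ! : ℂ) / z)
  refine hsum.congr_deriv ?_
  have hfactor : ∀ n ∈ range (m + 1), (-1) ^ n / (n ! : ℂ) * u ^ ((n : ℤ) - m - 1) *
      (w ^ (u - 1) * (n * log w ^ (n - 1) + u * log w ^ n) * -z)
        = -z * w ^ (u - 1) * ((-1) ^ n / (n ! : ℂ) * u ^ ((n : ℤ) - m - 1) *
          (n * log w ^ (n - 1) + u * log w ^ n)) := fun n _ => by ring
  have hexp : u - 1 = (y : ℂ) := by simp [u]
  rw [sum_congr rfl hfactor, ← mul_sum, sum_range_neg_one_pow_div_factorial_mul_zpow hu, hexp,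
    logPowMulCpow]
  have hfac : (m ! : ℂ) ≠ 0 := by exact_mod_cast factorial_ne_zero m
  field_simp
  have hsign : (-1 : ℂ) ^ (m + 1) * (-1) ^ m = -1 := by
    rw [← pow_add, show m + 1 + m = 2 * m + 1 by ring, pow_succ, pow_mul]
    simp
  linear_combination (-(w ^ (y : ℂ) * log w ^ m)) * hsign

theorem L₂_one_one (m : ℕ) {y : ℝ} (hy : y ≠ -1) : L₂ m y 1 1 = 0 := by
  have hu : ((1 + y : ℝ) : ℂ) ≠ 0 := ofReal_ne_zero.mpr fun h => hy (by linarith)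
  rw [L₂_eq_sum, ofReal_one, mul_one, sub_self]
  simp only [logPowMulCpow_zero _ hu, mul_zero, sum_const_zero]

theorem tendsto_L₂_one_nhdsLT_one (m : ℕ) {y : ℝ} (hy : -1 < y) :
    Tendsto (L₂ m y 1) (𝓝[<] 1) (𝓝 0) := by
  have hsub : Tendsto (fun s : ℝ => 1 - s) (𝓝[<] 1) (𝓝[>] 0) := by
    simpa using ((continuous_sub_left (1 : ℝ)).continuousWithinAt (s := Iio 1) (x := 1)
      ).tendsto_nhdsWithin (t := Ioi 0) fun s (hs : s < 1) => sub_pos.mpr hs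
  have hterm (n : ℕ) :
      Tendsto (fun s : ℝ => logPowMulCpow n ((1 + y : ℝ) : ℂ) (1 - s * 1))
        (𝓝[<] 1) (𝓝 0) := by
    refine ((tendsto_logPowMulCpow_nhdsGT_zero n (neg_lt_iff_pos_add'.mp hy)).comp hsub).congr
      fun s => ?_
    simp
  rw [funext (L₂_eq_sum m y 1)]
  simpa using (tendsto_finsetSum _ fun n _ => (hterm n).const_mul _).const_mul _

theorem continuousOn_L₂ (m : ℕ) {b y : ℝ} (hb : 0 ≤ b) (hy : -1 < y) {z : ℂ} (hz0 : z ≠ 0)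
    (hz1 : ‖z‖ ≤ 1) : ContinuousOn (L₂ m y z) (Icc b 1) := by
  intro s hs
  by_cases h : s < 1 ∨ z ≠ 1
  · exact (hasDerivAt_L₂ m hy.ne' hz0 (one_sub_ofReal_mul_mem_slitPlane hz1 (hb.trans hs.1)
      hs.2 h)).continuousAt.continuousWithinAt
  · push Not at h
    obtain ⟨hs1, rfl⟩ := h
    obtain rfl : s = 1 := le_antisymm hs.2 hs1
    refine (continuousWithinAt_Iio_iff_Iic.mp ?_).mono Icc_subset_Iic_self
    rw [ContinuousWithinAt, L₂_one_one m hy.ne']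
    exact tendsto_L₂_one_nhdsLT_one m hy

theorem integrableOn_logPowMulCpow_one_sub (m : ℕ) {b y : ℝ} (hb : 0 ≤ b) (hy : -1 < y) :
    IntegrableOn (fun s : ℝ => logPowMulCpow m y (1 - s * 1)) (Ioo b 1) := by
  have hreal (s : ℝ) (hs : s ≤ 1) :
      logPowMulCpow m y (1 - s * 1) = ((Real.log (1 - s) ^ m * (1 - s) ^ y : ℝ) : ℂ) := by
    rw [← logPowMulCpow_ofReal m y (sub_nonneg.mpr hs)]
    push_cast
    ring_nf
  set f : ℝ → ℝ := fun s => (-1) ^ m * (Real.log (1 - s) ^ m * (1 - s) ^ y)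
  have hderiv : ∀ s ∈ Ioo b 1, HasDerivAt (fun s => (-1) ^ m * (L₂ m y 1 s).re) (f s) s := by
    intro s hs
    have hL₂ := hasDerivAt_L₂ m hy.ne' one_ne_zero
      (one_sub_ofReal_mul_mem_slitPlane (by simp) (hb.trans hs.1.le) hs.2.le (Or.inl hs.2))
    have hre : HasDerivAt (fun s => (L₂ m y 1 s).re) (logPowMulCpow m y (1 - s * 1)).re s :=
      reCLM.hasFDerivAt.comp_hasDerivAt s hL₂
    rw [hreal s hs.2.le, ofReal_re] at hre
    exact hre.const_mul _
  have hf_nonneg : ∀ s ∈ Ioo b 1, 0 ≤ f s := by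
    intro s hs
    have hlog : Real.log (1 - s) ≤ 0 := Real.log_nonpos (by linarith [hs.2]) (by linarith [hs.1])
    rw [show f s = (-Real.log (1 - s)) ^ m * (1 - s) ^ y by rw [neg_pow, mul_assoc]]
    exact mul_nonneg (pow_nonneg (neg_nonneg.mpr hlog) m)
      (Real.rpow_nonneg (by linarith [hs.2]) y)
  have hcont : ContinuousOn (fun s => (-1) ^ m * (L₂ m y 1 s).re) (Icc b 1) :=
    continuousOn_const.mul (continuous_re.comp_continuousOn
      (continuousOn_L₂ m hb hy one_ne_zero (by simp)))
  have hf : IntegrableOn f (Ioo b 1) :=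
    (intervalIntegral.integrableOn_deriv_of_nonneg hcont hderiv hf_nonneg).mono_set
      Ioo_subset_Ioc_self
  refine IntegrableOn.congr_fun (hf.const_mul ((-1) ^ m)).ofReal (fun s hs => ?_)
    measurableSet_Ioo
  rw [hreal s hs.2.le, ← mul_assoc, ← mul_pow]
  norm_num

theorem integrableOn_logPowMulCpow_one_sub_mul (m : ℕ) {b y : ℝ} (hb : 0 ≤ b) (hy : -1 < y)
    {z : ℂ} (hz : ‖z‖ ≤ 1) :
    IntegrableOn (fun s : ℝ => logPowMulCpow m y (1 - s * z)) (Ioo b 1) := by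
  obtain rfl | hz1 := eq_or_ne z 1
  · exact integrableOn_logPowMulCpow_one_sub m hb hy
  have hcont : ContinuousOn (fun s : ℝ => logPowMulCpow m y (1 - s * z)) (Icc b 1) :=
    fun s hs => ((hasDerivAt_logPowMulCpow m y (one_sub_ofReal_mul_mem_slitPlane hz
      (hb.trans hs.1) hs.2 (Or.inr hz1))).continuousAt.comp
        (f := fun s : ℝ => 1 - (s : ℂ) * z) (by fun_prop)).continuousWithinAt
  exact hcont.integrableOn_Icc.mono_set Ioo_subset_Icc_self

/-- For `m ≥ 0`, `0 < b < 1`, `y > −1` and `0 < |z| ≤ 1`, the function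
`s ↦ (log(1−sz))^m (1−sz)^y` is integrable on `(b,1)` and
`∫_b^1 (log(1−sz))^m (1−sz)^y ds = L₂(1) − L₂(b)`, where in the case `z = 1` the value
`L₂(1)` is taken to be `0` (the limit of `L₂(s)` as `s → 1⁻`). -/
theorem integral_log_pow_cpow (m : ℕ) (b y : ℝ) (hb0 : 0 < b) (hb1 : b < 1)
    (hy : -1 < y) (z : ℂ) (hz0 : z ≠ 0) (hz1 : ‖z‖ ≤ 1) :
    IntegrableOn
      (fun s : ℝ => (Complex.log (1 - (s : ℂ) * z)) ^ m *
        (1 - (s : ℂ) * z) ^ ((y : ℝ) : ℂ)) (Set.Ioo b 1) ∧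
    ∫ s in Set.Ioo b 1, (Complex.log (1 - (s : ℂ) * z)) ^ m *
        (1 - (s : ℂ) * z) ^ ((y : ℝ) : ℂ) =
      (if z = 1 then 0 else L₂ m y z 1) - L₂ m y z b := by
  have hint := integrableOn_logPowMulCpow_one_sub_mul m hb0.le hy hz1
  refine ⟨hint, ?_⟩
  have hftc := intervalIntegral.integral_eq_sub_of_hasDerivAt_of_le hb1.le
    (continuousOn_L₂ m hb0.le hy hz0 hz1)
    (fun s hs => hasDerivAt_L₂ m hy.ne' hz0 (one_sub_ofReal_mul_mem_slitPlane hz1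
      (hb0.le.trans hs.1.le) hs.2.le (Or.inl hs.2)))
    ((intervalIntegrable_iff_integrableOn_Ioo_of_le hb1.le).mpr hint)
  rw [intervalIntegral.integral_of_le hb1.le, integral_Ioc_eq_integral_Ioo] at hftc
  refine hftc.trans ?_
  split_ifs with hz
  · rw [hz, L₂_one_one m hy.ne']
  · rfl
end

section
/- For every z ∈ ℂ with |z| < 1 and |1−z| ≤ 1, the multiple polylogarithm Li_{2,1,1} satisfies Li_{2,1,1}(z) = (π²/12)·log²(1−z) + log(1−z)·(Li₃(1−z) + 2·ζ(3)) − 3·Li₄(1−z) + π⁴/30, where Li₃ and Li₄ are given by their (absolutely convergent) power series at the point 1−z and ζ(3) = Σ_{n≥1} 1/n³. -/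
open Real

/-- The ordinary polylogarithm `Li_s(w) = Σ_{n≥1} wⁿ/n^s`, given by its power series. -/
noncomputable def polylog (s : ℕ) (w : ℂ) : ℂ :=
  ∑' n : ℕ, w ^ (n + 1) / ((n : ℂ) + 1) ^ s

/-!
`Li_{2,1}` and `Li_{2,1,1}` are iterated integrals: `d/dz Li_{2,1} = Li₂ / (1 - z)` and
`d/dz Li_{2,1,1} = Li_{2,1} / (1 - z)`, while `d/dz Li_{s+1}(1 - z) = -Li_s(1 - z) / (1 - z)` and
`Li₁(w) = -log (1 - w)`. On the lens `‖z‖ < 1, ‖1 - z‖ < 1` the derivative vanishes for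
Euler's `Li₂(z) + Li₂(1 - z) + log z log (1 - z)`, whose value `ζ(2)` is read off as `z → 0⁺`.
Feeding this in, `Li_{2,1}(z)` and `2 Li₃(1 - z) - log (1 - z) (Li₂(1 - z) + ζ(2)) - 2 ζ(3)`
have the same derivative on the lens, and then so do the two sides of the formula for
`Li_{2,1,1}`. All of these functions are continuous up to `‖1 - z‖ = 1`, so the identities extend
there, and comparing at `z = 0` (using `ζ(2) = π²/6`, `ζ(4) = π⁴/90`) fixes the constants.
-/

open Metric Filter Topology

structure MonomialFamily (ι : Type*) where
  exp : ι → ℕ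
  den : ι → ℂ

namespace MonomialFamily

variable {ι : Type*} (F : MonomialFamily ι)

-- Exponents are offset by one so that termwise derivatives `(exp i + 1) * z ^ exp i` involve no
-- truncated subtraction.
noncomputable def eval (z : ℂ) : ℂ :=
  ∑' i, z ^ (F.exp i + 1) / F.den i

/-- The family of `z ↦ ∫₀ᶻ F.eval t / (1 - t) dt`: expanding `1 / (1 - t) = ∑ tᶜ`, the term
`(i, c)` integrates `t ^ (exp i + 1 + c) / den i`. -/
def lift : MonomialFamily (ι × ℕ) where
  exp p := F.exp p.1 + p.2 + 1
  den p := F.den p.1 * ((F.exp p.1 + p.2 + 2 : ℕ) : ℂ)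

structure Admissible : Prop where
  summable_pow : ∀ r : ℝ, 0 ≤ r → r < 1 → Summable fun i => r ^ F.exp i
  exp_succ_le_norm_den : ∀ i, (F.exp i : ℝ) + 1 ≤ ‖F.den i‖

variable {F}

theorem Admissible.one_le_norm_den (hF : F.Admissible) (i : ι) : 1 ≤ ‖F.den i‖ := by
  linarith [hF.exp_succ_le_norm_den i, (F.exp i).cast_nonneg (α := ℝ)]

theorem Admissible.norm_deriv_term_le (hF : F.Admissible) {z : ℂ} {r : ℝ} (hzr : ‖z‖ ≤ r) (i : ι) :
    ‖((F.exp i : ℂ) + 1) * z ^ F.exp i / F.den i‖ ≤ r ^ F.exp i := by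
  have hden : 0 < ‖F.den i‖ := one_pos.trans_le (hF.one_le_norm_den i)
  have hexp : ‖(F.exp i : ℂ) + 1‖ = (F.exp i : ℝ) + 1 := by norm_cast
  rw [norm_div, norm_mul, norm_pow, hexp, div_le_iff₀ hden]
  calc ((F.exp i : ℝ) + 1) * ‖z‖ ^ F.exp i ≤ ‖F.den i‖ * r ^ F.exp i := by
        gcongr
        exact hF.exp_succ_le_norm_den i
    _ = r ^ F.exp i * ‖F.den i‖ := mul_comm _ _

theorem Admissible.norm_monomial_le (hF : F.Admissible) {z : ℂ} (hz : ‖z‖ ≤ 1) (i : ι) :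
    ‖z ^ (F.exp i + 1) / F.den i‖ ≤ ‖z‖ ^ F.exp i := by
  rw [norm_div, norm_pow, div_le_iff₀ (one_pos.trans_le (hF.one_le_norm_den i)), pow_succ]
  gcongr
  exact hz.trans (hF.one_le_norm_den i)

theorem Admissible.lift (hF : F.Admissible) : F.lift.Admissible where
  summable_pow r hr0 hr1 := by
    have h := (hF.summable_pow r hr0 hr1).mul_of_nonneg (summable_geometric_of_lt_one hr0 hr1)
      (fun _ => pow_nonneg hr0 _) (fun _ => pow_nonneg hr0 _)
    refine (h.mul_right r).congr fun p => ?_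
    simp only [MonomialFamily.lift, pow_succ, pow_add]
  exp_succ_le_norm_den p := by
    have h1 := hF.one_le_norm_den p.1
    simp only [MonomialFamily.lift, norm_mul, Complex.norm_natCast]
    push_cast
    nlinarith [(F.exp p.1 + p.2 : ℕ).cast_nonneg (α := ℝ)]

theorem eval_zero : F.eval 0 = 0 := by
  simp [eval]

theorem Admissible.hasDerivAt_eval (hF : F.Admissible) {z : ℂ} (hz : ‖z‖ < 1) :
    HasDerivAt F.eval (∑' i, ((F.exp i : ℂ) + 1) * z ^ F.exp i / F.den i) z := by
  obtain ⟨r, hzr, hr1⟩ := exists_between hz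
  have hr0 : 0 < r := (norm_nonneg z).trans_lt hzr
  unfold eval
  refine hasDerivAt_tsum_of_isPreconnected
    (g' := fun i y => ((F.exp i : ℂ) + 1) * y ^ F.exp i / F.den i)
    (hF.summable_pow r hr0.le hr1) isOpen_ball (convex_ball _ _).isPreconnected
    (fun i y _ => ?_) (fun i y hy => ?_) (mem_ball_self hr0) ?_ (mem_ball_zero_iff.mpr hzr)
  · simpa using (hasDerivAt_pow (F.exp i + 1) y).div_const (F.den i)
  · exact hF.norm_deriv_term_le (mem_ball_zero_iff.mp hy).le i
  · simpa only [zero_pow (Nat.succ_ne_zero _), zero_div] using summable_zero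

theorem Admissible.continuousOn_eval (hF : F.Admissible) : ContinuousOn F.eval (ball 0 1) :=
  fun _ hz => (hF.hasDerivAt_eval (mem_ball_zero_iff.mp hz)).continuousAt.continuousWithinAt

theorem Admissible.hasDerivAt_lift_eval (hF : F.Admissible) {z : ℂ} (hz : ‖z‖ < 1) :
    HasDerivAt F.lift.eval (F.eval z / (1 - z)) z := by
  convert hF.lift.hasDerivAt_eval hz using 1
  have hterm : Summable fun i => ‖z ^ (F.exp i + 1) / F.den i‖ := by
    refine .of_nonneg_of_le (fun _ => norm_nonneg _) (fun i => ?_)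
      (hF.summable_pow ‖z‖ (norm_nonneg z) hz)
    simpa using hF.norm_monomial_le hz.le i
  rw [eval, div_eq_mul_inv, ← tsum_geometric_of_norm_lt_one hz,
    tsum_mul_tsum_of_summable_norm hterm
      (by simpa using summable_geometric_of_lt_one (norm_nonneg z) hz)]
  refine tsum_congr fun p => ?_
  have hden : F.den p.1 ≠ 0 := norm_pos_iff.mp (one_pos.trans_le (hF.one_le_norm_den p.1))
  have hN : ((F.exp p.1 + p.2 + 2 : ℕ) : ℂ) ≠ 0 := Nat.cast_ne_zero.mpr (by omega)
  have hsucc : ((F.exp p.1 + p.2 + 1 : ℕ) : ℂ) + 1 = ((F.exp p.1 + p.2 + 2 : ℕ) : ℂ) := by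
    push_cast; ring
  simp only [MonomialFamily.lift, hsucc]
  field_simp
  ring

end MonomialFamily

def polylogFamily (s : ℕ) : MonomialFamily ℕ where
  exp n := n
  den n := ((n : ℂ) + 1) ^ s

theorem polylog_eq_eval (s : ℕ) : polylog s = (polylogFamily s).eval := rfl

theorem admissible_polylogFamily {s : ℕ} (hs : 1 ≤ s) : (polylogFamily s).Admissible where
  summable_pow _ hr0 hr1 := summable_geometric_of_lt_one hr0 hr1
  exp_succ_le_norm_den n := by
    simp only [polylogFamily, norm_pow]
    norm_cast
    exact Nat.le_self_pow (by omega) _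

theorem hasDerivAt_polylog_succ (s : ℕ) {w : ℂ} (hw : ‖w‖ < 1) (hw0 : w ≠ 0) :
    HasDerivAt (polylog (s + 1)) (polylog s w / w) w := by
  rw [polylog_eq_eval]
  convert (admissible_polylogFamily (Nat.le_add_left 1 s)).hasDerivAt_eval hw using 1
  rw [div_eq_iff hw0, polylog, ← tsum_mul_right]
  refine tsum_congr fun n => ?_
  have hn : (n : ℂ) + 1 ≠ 0 := Nat.cast_add_one_ne_zero n
  simp only [polylogFamily]
  field_simp
  ring

theorem continuousOn_polylog {s : ℕ} (hs : 2 ≤ s) :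
    ContinuousOn (polylog s) (closedBall 0 1) := by
  have hsum : Summable fun n : ℕ => 1 / ((n : ℝ) + 1) ^ s := by
    simpa using (summable_nat_add_iff 1).mpr (summable_one_div_nat_pow.mpr hs)
  refine continuousOn_tsum (fun n => (continuous_pow _).div_const _ |>.continuousOn) hsum
    fun n w hw => ?_
  have hn : ‖(n : ℂ) + 1‖ = (n : ℝ) + 1 := by norm_cast
  rw [norm_div, norm_pow, norm_pow, hn]
  gcongr
  exact pow_le_one₀ (norm_nonneg w) (mem_closedBall_zero_iff.mp hw)

theorem polylog_apply_one {s : ℕ} (hs : 1 < s) : polylog s 1 = riemannZeta s := by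
  rw [zeta_eq_tsum_one_div_nat_add_one_cpow (by norm_cast), polylog]
  simp

theorem polylog_one_apply {w : ℂ} (hw : ‖w‖ < 1) : polylog 1 w = -Complex.log (1 - w) := by
  rw [← (Complex.hasSum_taylorSeries_neg_log hw).tsum_eq, Summable.tsum_eq_zero_add, polylog]
  · simp
  · exact (Complex.hasSum_taylorSeries_neg_log hw).summable

theorem hasDerivAt_polylog_succ_one_sub (s : ℕ) {w : ℂ} (hw : ‖1 - w‖ < 1) (hw1 : w ≠ 1) :
    HasDerivAt (fun y => polylog (s + 1) (1 - y)) (-(polylog s (1 - w) / (1 - w))) w :=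
  (hasDerivAt_polylog_succ s hw (sub_ne_zero.mpr hw1.symm)).comp_const_sub 1 w

theorem hasDerivAt_log_one_sub {w : ℂ} (hw : ‖w‖ < 1) :
    HasDerivAt (fun y => Complex.log (1 - y)) (-(1 - w)⁻¹) w := by
  have hslit : 1 - w ∈ Complex.slitPlane := by
    simpa [sub_eq_add_neg] using Complex.mem_slitPlane_of_norm_lt_one (z := -w) (by simpa)
  simpa [div_eq_mul_inv] using ((hasDerivAt_id w).const_sub 1).clog hslit

def lens : Set ℂ := ball 0 1 ∩ ball 1 1

theorem mem_lens {z : ℂ} : z ∈ lens ↔ ‖z‖ < 1 ∧ ‖1 - z‖ < 1 := by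
  rw [lens, Set.mem_inter_iff, mem_ball_zero_iff, mem_ball_iff_norm']

theorem ne_zero_of_mem_lens {z : ℂ} (hz : z ∈ lens) : z ≠ 0 := by
  rintro rfl
  simp [mem_lens] at hz

theorem ne_one_of_mem_lens {z : ℂ} (hz : z ∈ lens) : z ≠ 1 := by
  rintro rfl
  simp [mem_lens] at hz

theorem ofReal_mem_lens {t : ℝ} (ht : t ∈ Set.Ioo 0 1) : (t : ℂ) ∈ lens := by
  have h1t : (1 : ℂ) - t = ((1 - t : ℝ) : ℂ) := by push_cast; ring
  rw [mem_lens, h1t, Complex.norm_real, Complex.norm_real, Real.norm_of_nonneg ht.1.le,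
    Real.norm_of_nonneg (by linarith [ht.2])]
  constructor <;> linarith [ht.1, ht.2]

theorem exists_const_on_lens {f : ℂ → ℂ} (hf : ∀ w ∈ lens, HasDerivAt f 0 w) :
    ∃ c, ∀ w ∈ lens, f w = c :=
  (isOpen_ball.inter isOpen_ball).exists_is_const_of_deriv_eq_zero
    ((convex_ball _ _).inter (convex_ball _ _)).isPreconnected
    (fun w hw => (hf w hw).differentiableAt.differentiableWithinAt)
    (fun w hw => (hf w hw).deriv)

theorem eqOn_of_hasDerivAt_lens {f g f' : ℂ → ℂ} (hf : ∀ w ∈ lens, HasDerivAt f (f' w) w)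
    (hg : ∀ w ∈ lens, HasDerivAt g (f' w) w) (hfc : ContinuousOn f (ball 0 1 ∩ closedBall 1 1))
    (hgc : ContinuousOn g (ball 0 1 ∩ closedBall 1 1)) (h0 : f 0 = g 0) :
    Set.EqOn f g (ball 0 1 ∩ closedBall 1 1) := by
  obtain ⟨c, hc⟩ := exists_const_on_lens (f := f - g) fun w hw => by
    simpa using (hf w hw).sub (hg w hw)
  have hclosure : ball (0 : ℂ) 1 ∩ closedBall 1 1 ⊆ closure lens := by
    rw [← closure_ball (1 : ℂ) one_ne_zero]
    exact isOpen_ball.inter_closure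
  have hsub : Set.EqOn (f - g) (fun _ => c) (ball 0 1 ∩ closedBall 1 1) :=
    Set.EqOn.of_subset_closure hc (hfc.sub hgc) continuousOn_const
      (Set.inter_subset_inter_right _ ball_subset_closedBall) hclosure
  have hc0 : f 0 - g 0 = c := hsub ⟨mem_ball_self one_pos, by simp⟩
  rw [h0, sub_self, eq_comm] at hc0
  intro w hw
  simpa [hc0, sub_eq_zero] using hsub hw

theorem continuousOn_polylog_one_sub {s : ℕ} (hs : 2 ≤ s) :
    ContinuousOn (fun z => polylog s (1 - z)) (closedBall 1 1) :=
  (continuousOn_polylog hs).comp (continuousOn_const.sub continuousOn_id) fun _ hz =>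
    mem_closedBall_zero_iff.mpr (mem_closedBall_iff_norm'.mp hz)

theorem continuousOn_log_one_sub : ContinuousOn (fun z => Complex.log (1 - z)) (ball 0 1) :=
  fun _ hz => (hasDerivAt_log_one_sub (mem_ball_zero_iff.mp hz)).continuousAt.continuousWithinAt

theorem tendsto_log_mul_log_one_sub :
    Tendsto (fun t : ℝ => Complex.log t * Complex.log (1 - t)) (𝓝[>] 0) (𝓝 0) := by
  have hbound : Tendsto (fun t : ℝ => 3 / 2 * |t * Real.log t|) (𝓝[>] 0) (𝓝 0) := by
    simpa using ((Real.continuous_mul_log.tendsto 0).abs.const_mul (3 / 2)).mono_left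
      nhdsWithin_le_nhds
  refine squeeze_zero_norm' ?_ hbound
  filter_upwards [Ioo_mem_nhdsGT (by norm_num : (0 : ℝ) < 1 / 2)] with t ht
  have hlog1 : ‖Complex.log (1 - t)‖ ≤ 3 / 2 * t := by
    simpa [← sub_eq_add_neg, abs_of_pos ht.1] using
      Complex.norm_log_one_add_half_le_self (z := -t) (by simpa [abs_of_pos ht.1] using ht.2.le)
  rw [norm_mul, ← Complex.ofReal_log ht.1.le, Complex.norm_real, Real.norm_eq_abs, abs_mul,
    abs_of_pos ht.1]
  nlinarith [abs_nonneg (Real.log t)]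

theorem hasDerivAt_polylog_two_add_polylog_two_one_sub {w : ℂ} (hw : w ∈ lens) :
    HasDerivAt (fun z => polylog 2 z + polylog 2 (1 - z) + Complex.log z * Complex.log (1 - z))
      0 w := by
  obtain ⟨hw0, hw1⟩ := mem_lens.mp hw
  have hwz := ne_zero_of_mem_lens hw
  have h1w : 1 - w ≠ 0 := sub_ne_zero.mpr (ne_one_of_mem_lens hw).symm
  have hlog := Complex.hasDerivAt_log
    (Complex.ball_one_subset_slitPlane (mem_ball_iff_norm'.mpr hw1))
  refine (((hasDerivAt_polylog_succ 1 hw0 hwz).add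
    (hasDerivAt_polylog_succ_one_sub 1 hw1 (ne_one_of_mem_lens hw))).add
    (hlog.mul (hasDerivAt_log_one_sub hw0))).congr_deriv ?_
  rw [polylog_one_apply hw0, polylog_one_apply hw1, sub_sub_cancel]
  field_simp
  ring

theorem tendsto_polylog_two_add_polylog_two_one_sub :
    Tendsto (fun t : ℝ => polylog 2 t + polylog 2 (1 - t)) (𝓝[>] 0) (𝓝 (π ^ 2 / 6)) := by
  have hmem : ∀ t ∈ Set.Ioo (0 : ℝ) 1, (t : ℂ) ∈ closedBall 0 1 ∧ 1 - (t : ℂ) ∈ closedBall 0 1 :=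
    fun t ht => by
      obtain ⟨h0, h1⟩ := mem_lens.mp (ofReal_mem_lens ht)
      exact ⟨mem_closedBall_zero_iff.mpr h0.le, mem_closedBall_zero_iff.mpr h1.le⟩
  have hcont : ContinuousWithinAt (fun t : ℝ => polylog 2 t + polylog 2 (1 - t))
      (Set.Ioo 0 1) 0 := by
    refine ContinuousWithinAt.add ?_ ?_
    · exact ((continuousOn_polylog le_rfl) _ (by simp)).comp
        Complex.continuous_ofReal.continuousWithinAt fun t ht => (hmem t ht).1
    · exact ((continuousOn_polylog le_rfl) _ (by simp)).comp
        (continuous_const.sub Complex.continuous_ofReal).continuousWithinAt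
        fun t ht => (hmem t ht).2
  have hlim := hcont.tendsto
  rw [nhdsWithin_Ioo_eq_nhdsGT one_pos] at hlim
  simpa [polylog_eq_eval, MonomialFamily.eval_zero, polylog_apply_one, riemannZeta_two] using hlim

/-- Euler's reflection formula for the dilogarithm. -/
theorem polylog_two_add_polylog_two_one_sub {z : ℂ} (hz : z ∈ lens) :
    polylog 2 z + polylog 2 (1 - z) + Complex.log z * Complex.log (1 - z) = π ^ 2 / 6 := by
  obtain ⟨c, hc⟩ := exists_const_on_lens fun w hw =>
    hasDerivAt_polylog_two_add_polylog_two_one_sub hw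
  have hlim_c : Tendsto (fun t : ℝ => polylog 2 t + polylog 2 (1 - t) +
      Complex.log t * Complex.log (1 - t)) (𝓝[>] 0) (𝓝 c) :=
    tendsto_const_nhds.congr' <| eventually_of_mem (Ioo_mem_nhdsGT one_pos) fun t ht =>
      (hc _ (ofReal_mem_lens ht)).symm
  rw [hc z hz, tendsto_nhds_unique hlim_c
    (tendsto_polylog_two_add_polylog_two_one_sub.add tendsto_log_mul_log_one_sub), add_zero]

theorem admissible_polylogFamily_two : (polylogFamily 2).Admissible :=
  admissible_polylogFamily one_le_two

theorem eqOn_eval_lift_polylogFamily_two :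
    Set.EqOn (polylogFamily 2).lift.eval (fun z => 2 * polylog 3 (1 - z) -
      Complex.log (1 - z) * (polylog 2 (1 - z) + π ^ 2 / 6) - 2 * polylog 3 1)
      (ball 0 1 ∩ closedBall 1 1) := by
  refine eqOn_of_hasDerivAt_lens (f' := fun w => polylog 2 w / (1 - w))
    (fun w hw => admissible_polylogFamily_two.hasDerivAt_lift_eval (mem_lens.mp hw).1)
    (fun w hw => ?_) (admissible_polylogFamily_two.lift.continuousOn_eval.mono
      Set.inter_subset_left) ?_ ?_
  · obtain ⟨hw0, hw1⟩ := mem_lens.mp hw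
    have h1w : 1 - w ≠ 0 := sub_ne_zero.mpr (ne_one_of_mem_lens hw).symm
    refine ((((hasDerivAt_polylog_succ_one_sub 2 hw1 (ne_one_of_mem_lens hw)).const_mul 2).sub
      ((hasDerivAt_log_one_sub hw0).mul ((hasDerivAt_polylog_succ_one_sub 1 hw1
        (ne_one_of_mem_lens hw)).add_const _))).sub_const _).congr_deriv ?_
    have heuler : polylog 2 w = π ^ 2 / 6 - polylog 2 (1 - w) -
        Complex.log w * Complex.log (1 - w) := by
      linear_combination polylog_two_add_polylog_two_one_sub hw
    rw [polylog_one_apply hw1, sub_sub_cancel, heuler]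
    field_simp
    ring
  · have hLi2 := (continuousOn_polylog_one_sub (le_refl 2)).mono
      (Set.inter_subset_right (s := ball 0 1))
    have hLi3 := (continuousOn_polylog_one_sub (by norm_num : 2 ≤ 3)).mono
      (Set.inter_subset_right (s := ball 0 1))
    have hlog := continuousOn_log_one_sub.mono (Set.inter_subset_left (t := closedBall 1 1))
    fun_prop
  · simp [MonomialFamily.eval_zero]

theorem eqOn_eval_lift_lift_polylogFamily_two :
    Set.EqOn (polylogFamily 2).lift.lift.eval (fun z => π ^ 2 / 12 * Complex.log (1 - z) ^ 2 +
      Complex.log (1 - z) * (polylog 3 (1 - z) + 2 * polylog 3 1) -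
      3 * polylog 4 (1 - z) + π ^ 4 / 30) (ball 0 1 ∩ closedBall 1 1) := by
  refine eqOn_of_hasDerivAt_lens (f' := fun w => (polylogFamily 2).lift.eval w / (1 - w))
    (fun w hw => admissible_polylogFamily_two.lift.hasDerivAt_lift_eval (mem_lens.mp hw).1)
    (fun w hw => ?_) (admissible_polylogFamily_two.lift.lift.continuousOn_eval.mono
      Set.inter_subset_left) ?_ ?_
  · obtain ⟨hw0, hw1⟩ := mem_lens.mp hw
    have h1w : 1 - w ≠ 0 := sub_ne_zero.mpr (ne_one_of_mem_lens hw).symm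
    have hlog := hasDerivAt_log_one_sub hw0
    refine (((((hlog.pow 2).const_mul _).add (hlog.mul
      ((hasDerivAt_polylog_succ_one_sub 2 hw1 (ne_one_of_mem_lens hw)).add_const _))).sub
      ((hasDerivAt_polylog_succ_one_sub 3 hw1 (ne_one_of_mem_lens hw)).const_mul 3)).add_const
      _).congr_deriv ?_
    rw [eqOn_eval_lift_polylogFamily_two (Set.inter_subset_inter_right _ ball_subset_closedBall hw)]
    field_simp
    ring
  · have hLi3 := (continuousOn_polylog_one_sub (by norm_num : 2 ≤ 3)).mono
      (Set.inter_subset_right (s := ball 0 1))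
    have hLi4 := (continuousOn_polylog_one_sub (by norm_num : 2 ≤ 4)).mono
      (Set.inter_subset_right (s := ball 0 1))
    have hlog := continuousOn_log_one_sub.mono (Set.inter_subset_left (t := closedBall 1 1))
    fun_prop
  · simp [MonomialFamily.eval_zero, polylog_apply_one, riemannZeta_four]
    ring

def gapsEquiv : (ℕ × ℕ) × ℕ ≃ {n : Fin 3 → ℕ // StrictMono n ∧ 0 < n 0} where
  toFun p := ⟨![p.1.1 + 1, p.1.1 + p.1.2 + 2, p.1.1 + p.1.2 + p.2 + 3], by
    refine ⟨Fin.strictMono_iff_lt_succ.mpr fun i => ?_, by simp⟩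
    fin_cases i <;> simp⟩
  invFun n := ((n.1 0 - 1, n.1 1 - n.1 0 - 1), n.1 2 - n.1 1 - 1)
  left_inv := by
    rintro ⟨⟨a, b⟩, c⟩
    simp [Prod.ext_iff]
    omega
  right_inv := by
    rintro ⟨n, hmono, hpos⟩
    have h01 : n 0 < n 1 := hmono (by decide : (0 : Fin 3) < 1)
    have h12 : n 1 < n 2 := hmono (by decide : (1 : Fin 3) < 2)
    ext i
    fin_cases i <;> simp <;> omega

theorem multiPolylog_two_one_one_eq_eval :
    multiPolylog ![2, 1, 1] = (polylogFamily 2).lift.lift.eval := by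
  ext z
  rw [multiPolylog, ← gapsEquiv.tsum_eq]
  refine tsum_congr fun ⟨⟨a, b⟩, c⟩ => ?_
  rw [gapsEquiv, Equiv.coe_fn_mk, Fin.prod_univ_three]
  simp [MonomialFamily.lift, polylogFamily]
  ring

/-- For `|z| < 1` and `|1−z| ≤ 1`:
`Li_{2,1,1}(z) = (π²/12)·log²(1−z) + log(1−z)·(Li₃(1−z) + 2ζ(3)) − 3·Li₄(1−z) + π⁴/30`,
where `ζ(3) = Σ_{n≥1} 1/n³ = Li₃(1)`. -/
theorem multiPolylog_two_one_one_eq (z : ℂ) (hz1 : ‖z‖ < 1) (hz2 : ‖1 - z‖ ≤ 1) :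
    multiPolylog ![2, 1, 1] z =
      ((π : ℂ) ^ 2 / 12) * (Complex.log (1 - z)) ^ 2 +
        Complex.log (1 - z) * (polylog 3 (1 - z) + 2 * polylog 3 1) -
        3 * polylog 4 (1 - z) + (π : ℂ) ^ 4 / 30 := by
  rw [multiPolylog_two_one_one_eq_eval]
  exact eqOn_eval_lift_lift_polylogFamily_two
    ⟨mem_ball_zero_iff.mpr hz1, mem_closedBall_iff_norm'.mpr hz2⟩
end
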